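/- With the same coefficients C_β as above (N ≥ 1, h = 1/N, ω ∈ ℝ, ω ≠ 0), one has ∑_{β=0}^{N} C_β · e^{hβ} = (e^{2πiω+1} − 1)/(2πiω + 1). -/

import Mathlib

/-- The optimal quadrature coefficients of Theorem 3 (for the space W₂^{(1,0)}[0,1]),
with `h = 1/N`. -/
noncomputable def Copt (N : ℕ) (ω : ℝ) (β : ℕ) : ℂ :=
  let h : ℝ := 1 / N
  let tω : ℂ := 2 * (Real.pi : ℂ) * Complex.I * ω
  let den : ℂ := ((Real.exp (2 * h) - 1 : ℝ) : ℂ) *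
    ((4 * Real.pi ^ 2 * ω ^ 2 + 1 : ℝ) : ℂ)
  if β = 0 then
    (1 + (Real.exp (2 * h) : ℂ) + tω * ((Real.exp (2 * h) : ℂ) - 1)
      - 2 * Complex.exp ((tω + 1) * h)) / den
  else if β = N then
    Complex.exp tω * (1 + (Real.exp (2 * h) : ℂ) - tω * ((Real.exp (2 * h) : ℂ) - 1)
      - 2 * Complex.exp ((1 - tω) * h)) / den
  else
    ((2 * (1 + Real.exp (2 * h) - 2 * Real.exp h * Real.cos (2 * Real.pi * ω * h)) : ℝ) : ℂ)
      / den * Complex.exp (tω * h * β)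

set_option maxHeartbeats 2000000 in
private lemma optimal_exact_exp_aux (z w t Z : ℂ) (hzw1 : z*w-1 ≠ 0) (hz1 : z-1 ≠ 0)
    (h1t : 1+t ≠ 0) (h1t' : 1-t ≠ 0) (ht1 : t+1 ≠ 0) :
    (1 + z*w + t*(z*w-1) - 2*z)/((z*w-1)*((1+t)*(1-t)))
      + 2*(1-z)*(1-w)/((z*w-1)*((1+t)*(1-t))) * ((Z - z^1)/(z-1))
      + Z*(1+z*w - t*(z*w-1) - 2*w)/((z*w-1)*((1+t)*(1-t))) = (Z-1)/(t+1) := by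
  have hD : (z*w-1)*((1+t)*(1-t)) ≠ 0 := mul_ne_zero hzw1 (mul_ne_zero h1t h1t')
  have hDz : (z*w-1)*((1+t)*(1-t)) * (z-1) ≠ 0 := mul_ne_zero hD hz1
  rw [div_mul_div_comm, div_add_div _ _ hD hDz, div_add_div _ _ (mul_ne_zero hD hDz) hD,
    div_eq_div_iff (mul_ne_zero (mul_ne_zero hD hDz) hD) ht1]
  ring

set_option maxHeartbeats 1600000 in
theorem optimal_exact_exp (N : ℕ) (hN : 1 ≤ N) (ω : ℝ) (hω : ω ≠ 0) :
    ∑ β ∈ Finset.range (N + 1), Copt N ω β * Complex.exp (((1 / N : ℝ) * β : ℝ))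
      = (Complex.exp (2 * (Real.pi : ℂ) * Complex.I * ω + 1) - 1)
          / (2 * (Real.pi : ℂ) * Complex.I * ω + 1) := by
  have hN0 : (N : ℝ) ≠ 0 := by positivity
  set h : ℝ := 1 / N with hh
  have hhpos : 0 < h := by positivity
  set t : ℂ := 2 * (Real.pi : ℂ) * Complex.I * ω with ht
  set z : ℂ := Complex.exp ((t + 1) * h) with hz
  set w : ℂ := Complex.exp ((1 - t) * h) with hw
  set Z : ℂ := Complex.exp (t + 1) with hZ
  have hhN : (h : ℂ) * N = 1 := by
    rw [hh]; push_cast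
    rw [one_div, inv_mul_cancel₀ (by exact_mod_cast hN0 : (N : ℂ) ≠ 0)]
  -- exp(2h) = z*w
  have hE : ((Real.exp (2 * h) : ℝ) : ℂ) = z * w := by
    rw [hz, hw, ← Complex.exp_add, Complex.ofReal_exp]
    congr 1; push_cast; ring
  -- z + w = 2 e^h cos(2πωh)
  have hzw : z + w = 2 * ((Real.exp h : ℝ) : ℂ) * ((Real.cos (2 * Real.pi * ω * h) : ℝ) : ℂ) := by
    have h1 : (t + 1) * (h : ℂ) = ((2 * Real.pi * ω * h : ℝ) : ℂ) * Complex.I + ((h : ℝ) : ℂ) := by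
      rw [ht]; push_cast; ring
    have h2 : (1 - t) * (h : ℂ) = (-(2 * Real.pi * ω * h : ℝ) : ℂ) * Complex.I + ((h : ℝ) : ℂ) := by
      rw [ht]; push_cast; ring
    rw [hz, hw, h1, h2, Complex.exp_add, Complex.exp_add, Complex.exp_mul_I,
      Complex.exp_mul_I, ← Complex.ofReal_exp]
    simp only [Complex.cos_neg, Complex.sin_neg, ← Complex.ofReal_cos, ← Complex.ofReal_sin]
    ring
  have hzN : z ^ N = Z := by
    rw [hz, ← Complex.exp_nat_mul, hZ]
    congr 1
    calc (N : ℂ) * ((t + 1) * h) = (t + 1) * ((h : ℂ) * N) := by ring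
    _ = t + 1 := by rw [hhN, mul_one]
  -- nonzero facts
  have hE1 : ((Real.exp (2 * h) : ℝ) : ℂ) - 1 ≠ 0 := by
    rw [show (1 : ℂ) = ((1 : ℝ) : ℂ) by norm_num, ← Complex.ofReal_sub, Complex.ofReal_ne_zero]
    have : (1 : ℝ) < Real.exp (2 * h) := Real.one_lt_exp_iff.2 (by positivity)
    linarith
  have hzw1 : z * w - 1 ≠ 0 := by rw [← hE]; exact hE1
  have hz1 : z - 1 ≠ 0 := by
    rw [sub_ne_zero]
    intro hzz
    have habs : ‖z‖ = Real.exp h := by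
      rw [hz, Complex.norm_exp]
      congr 1
      rw [ht]
      simp [Complex.mul_re, Complex.add_re, Complex.mul_im]
    rw [hzz] at habs
    simp at habs
    have := Real.exp_pos h
    nlinarith [Real.add_one_le_exp h]
  have h1t : 1 + t ≠ 0 := by
    intro hc
    have := congrArg Complex.re hc
    simp [ht, Complex.mul_re, Complex.add_re, Complex.mul_im] at this
  have ht1 : t + 1 ≠ 0 := by rwa [add_comm] at h1t
  have h1t' : 1 - t ≠ 0 := by
    intro hc
    have := congrArg Complex.re hc
    simp [ht, Complex.mul_re, Complex.sub_re, Complex.mul_im] at this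
  have hfac : ((4 * Real.pi ^ 2 * ω ^ 2 + 1 : ℝ) : ℂ) = (1 + t) * (1 - t) := by
    rw [ht]; push_cast
    have : Complex.I ^ 2 = -1 := Complex.I_sq
    ring_nf
    rw [this]; ring
  have hfacne : ((4 * Real.pi ^ 2 * ω ^ 2 + 1 : ℝ) : ℂ) ≠ 0 := by
    rw [hfac]; exact mul_ne_zero h1t h1t'
  -- split the sum
  rw [Finset.range_eq_Ico, Finset.sum_eq_sum_Ico_succ_bot (by omega : 0 < N + 1),
    Finset.sum_Ico_succ_top (by omega : 1 ≤ N)]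
  -- middle sum
  have hmid : ∑ β ∈ Finset.Ico 1 N, Copt N ω β * Complex.exp ((h * β : ℝ)) =
      ((2 * (1 + Real.exp (2 * h) - 2 * Real.exp h * Real.cos (2 * Real.pi * ω * h)) : ℝ) : ℂ)
        / (((Real.exp (2 * h) - 1 : ℝ) : ℂ) * ((4 * Real.pi ^ 2 * ω ^ 2 + 1 : ℝ) : ℂ))
        * ((z ^ N - z ^ 1) / (z - 1)) := by
    rw [← geom_sum_Ico (sub_ne_zero.mp hz1) hN, Finset.mul_sum]
    apply Finset.sum_congr rfl
    intro β hβ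
    simp only [Finset.mem_Ico] at hβ
    rw [Copt]
    simp only [← hh, ← ht, if_neg (by omega : ¬ β = 0), if_neg (by omega : ¬ β = N)]
    rw [mul_assoc, ← Complex.exp_add, hz, ← Complex.exp_nat_mul]
    congr 2
    push_cast
    ring
  rw [hmid]
  have hC0 : Copt N ω 0 = (1 + ((Real.exp (2 * h) : ℝ) : ℂ) + t * (((Real.exp (2 * h) : ℝ) : ℂ) - 1)
      - 2 * z) / (((Real.exp (2 * h) - 1 : ℝ) : ℂ) * ((4 * Real.pi ^ 2 * ω ^ 2 + 1 : ℝ) : ℂ)) := by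
    rw [Copt]; simp only [← hh, ← ht, ← hz, if_pos rfl]; norm_num
  have hCN : Copt N ω N = Complex.exp t * (1 + ((Real.exp (2 * h) : ℝ) : ℂ)
      - t * (((Real.exp (2 * h) : ℝ) : ℂ) - 1) - 2 * w)
      / (((Real.exp (2 * h) - 1 : ℝ) : ℂ) * ((4 * Real.pi ^ 2 * ω ^ 2 + 1 : ℝ) : ℂ)) := by
    rw [Copt]; simp only [← hh, ← ht, ← hw, if_neg (by omega : ¬ N = 0), if_pos rfl]; norm_num
  have e0 : Complex.exp ((h * ((0 : ℕ) : ℝ) : ℝ)) = 1 := by norm_num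
  have eN : Complex.exp ((h * ((N : ℕ) : ℝ) : ℝ)) = Complex.exp 1 := by
    have : h * (N : ℝ) = 1 := by rw [hh]; field_simp
    rw [this, Complex.ofReal_one]
  rw [hC0, hCN, e0, eN, mul_one]
  have hlast : Complex.exp t * (1 + ((Real.exp (2 * h) : ℝ) : ℂ)
      - t * (((Real.exp (2 * h) : ℝ) : ℂ) - 1) - 2 * w)
      / (((Real.exp (2 * h) - 1 : ℝ) : ℂ) * ((4 * Real.pi ^ 2 * ω ^ 2 + 1 : ℝ) : ℂ))
      * Complex.exp 1
      = Z * (1 + ((Real.exp (2 * h) : ℝ) : ℂ) - t * (((Real.exp (2 * h) : ℝ) : ℂ) - 1) - 2 * w)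
      / (((Real.exp (2 * h) - 1 : ℝ) : ℂ) * ((4 * Real.pi ^ 2 * ω ^ 2 + 1 : ℝ) : ℂ)) := by
    rw [hZ, Complex.exp_add]; ring
  rw [hlast]
  have hE' : ((Real.exp (2 * h) - 1 : ℝ) : ℂ) = z * w - 1 := by
    rw [Complex.ofReal_sub, Complex.ofReal_one, hE]
  have hA : ((2 * (1 + Real.exp (2 * h) - 2 * Real.exp h * Real.cos (2 * Real.pi * ω * h)) : ℝ) : ℂ)
      = 2 * (1 - z) * (1 - w) := by
    have hE2 := hE
    have hzw2 := hzw
    push_cast at hE2 hzw2 ⊢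
    linear_combination 2 * hE2 + 2 * hzw2
  rw [hzN, hE', hE, hA, hfac]
  clear_value z w Z t
  rw [← add_assoc]
  exact optimal_exact_exp_aux z w t Z hzw1 hz1 h1t h1t' ht1
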